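/- arXiv:math/0511226 — 2 statements merged into one kernel-verified Lean document; each statement's English description precedes it below -/
import Mathlib

section
/- For every p ∈ (0,1) and every integer k ≥ 0, there exists a real polynomial Q of degree at most ⌊k/2⌋ such that for all positive integers n: Σ_{i=0}^n C(n,i) p^i (1−p)^{n−i} (i − np)^k = Q(n). That is, the k-th central moment of the binomial distribution is a polynomial of degree at most ⌊k/2⌋ in n. -/
/-!
Conditioning on the last trial gives `μ_k(n + 1) = ∑_{j ≤ k} C(k, j) c_{k-j} μ_j(n)`, where `c_r`
is the `r`-th central moment of a Bernoulli(p) variable. Since `c_0 = 1` and `c_1 = 0`, the forward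
difference of `n ↦ μ_k(n)` is a linear combination of the `μ_j` with `j ≤ k - 2`, so by induction
its `(⌊k/2⌋ + 1)`-th forward difference vanishes. Newton's forward-difference formula then writes
`μ_k(n)` as a combination of `C(n, j)`, `j ≤ ⌊k/2⌋`, i.e. as a polynomial of degree `≤ ⌊k/2⌋`.
-/

open Finset Polynomial Nat

theorem fwdDiff_iter_eq_zero_of_le {M G : Type*} [AddCommMonoid M] [AddCommGroup G] {h : M}
    {f : M → G} {m n : ℕ} (hf : (fwdDiff h)^[m] f = 0) (hmn : m ≤ n) : (fwdDiff h)^[n] f = 0 := by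
  obtain ⟨k, rfl⟩ := Nat.exists_eq_add_of_le hmn
  rw [add_comm, Function.iterate_add_apply, hf]
  exact Function.iterate_fixed (fwdDiff_const h 0) k

theorem exists_natDegree_le_of_fwdDiff_iter_eq_zero {K : Type*} [Field K] [CharZero K]
    {f : ℕ → K} {d : ℕ} (hf : (fwdDiff 1)^[d + 1] f = 0) :
    ∃ Q : K[X], Q.natDegree ≤ d ∧ ∀ n : ℕ, f n = Q.eval (n : K) := by
  refine ⟨∑ k ∈ range (d + 1), C ((fwdDiff 1)^[k] f 0 / k !) * descPochhammer K k, ?_, fun n => ?_⟩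
  · refine natDegree_sum_le_of_forall_le _ _ fun k hk => ?_
    rw [mem_range, Nat.lt_succ_iff] at hk
    exact (natDegree_C_mul_le _ _).trans ((descPochhammer_natDegree K k).trans_le hk)
  · have newton : f n = ∑ k ∈ range (n + 1), (n.choose k : K) * (fwdDiff 1)^[k] f 0 := by
      simpa using shift_eq_sum_fwdDiff_iter 1 f n 0
    calc f n = ∑ k ∈ range (n + d + 1), (n.choose k : K) * (fwdDiff 1)^[k] f 0 := by
          rw [newton]
          refine sum_subset (range_subset_range.2 (by omega)) fun k _ hk => ?_
          rw [Nat.choose_eq_zero_of_lt (by simpa using hk), Nat.cast_zero, zero_mul]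
      _ = ∑ k ∈ range (d + 1), (n.choose k : K) * (fwdDiff 1)^[k] f 0 := by
          refine (sum_subset (range_subset_range.2 (by omega)) fun k _ hk => ?_).symm
          rw [fwdDiff_iter_eq_zero_of_le hf (by simpa using hk), Pi.zero_apply, mul_zero]
      _ = _ := by
          simp only [eval_finsetSum, eval_mul, eval_C, descPochhammer_eval_eq_descFactorial,
            Nat.descFactorial_eq_factorial_mul_choose, Nat.cast_mul]
          refine sum_congr rfl fun k _ => ?_
          rw [← mul_assoc, div_mul_cancel₀ _ (Nat.cast_ne_zero.2 k.factorial_ne_zero), mul_comm]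

theorem sum_range_choose_succ_mul_pow_mul_pow {R : Type*} [CommSemiring R] (a b : R) (m : ℕ)
    (g : ℕ → R) :
    ∑ i ∈ range (m + 1 + 1), ((m + 1).choose i : R) * a ^ i * b ^ (m + 1 - i) * g i =
      b * ∑ i ∈ range (m + 1), (m.choose i : R) * a ^ i * b ^ (m - i) * g i +
        a * ∑ i ∈ range (m + 1), (m.choose i : R) * a ^ i * b ^ (m - i) * g (i + 1) := by
  have := sum_choose_succ_mul (fun i j => a ^ i * b ^ j * g i) m
  simp only [← mul_assoc] at this
  rw [this, mul_sum, mul_sum]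
  congr 1 <;> refine sum_congr rfl fun i _ => ?_
  · rw [show m + 1 - i = m - i + 1 by grind]
    ring
  · ring

section CentralMoments

variable {R : Type*} [CommRing R] (p : R)

def bernoulliCentralMoment (r : ℕ) : R := (1 - p) * (-p) ^ r + p * (1 - p) ^ r

theorem bernoulliCentralMoment_zero : bernoulliCentralMoment p 0 = 1 := by
  simp [bernoulliCentralMoment]

theorem bernoulliCentralMoment_one : bernoulliCentralMoment p 1 = 0 := by
  simp only [bernoulliCentralMoment]
  ring

def binomialCentralMoment (k n : ℕ) : R :=
  ∑ i ∈ range (n + 1), (n.choose i : R) * p ^ i * (1 - p) ^ (n - i) * ((i : R) - n * p) ^ k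

/-- `𝔼[(x + B - p) ^ k]` for `B ∼ Bernoulli(p)`, expanded binomially. -/
theorem bernoulli_average_add_pow (x : R) (k : ℕ) :
    (1 - p) * (x - p) ^ k + p * (x + (1 - p)) ^ k =
      ∑ j ∈ range (k + 1), (k.choose j : R) * bernoulliCentralMoment p (k - j) * x ^ j := by
  rw [sub_eq_add_neg x p, add_pow, add_pow, mul_sum, mul_sum, ← sum_add_distrib]
  refine sum_congr rfl fun j _ => ?_
  rw [bernoulliCentralMoment]
  ring

theorem binomialCentralMoment_zero (n : ℕ) : binomialCentralMoment p 0 n = 1 := by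
  calc _ = (p + (1 - p)) ^ n := by
        rw [binomialCentralMoment, add_pow]
        exact sum_congr rfl fun i _ => by ring
    _ = 1 := by rw [add_sub_cancel, one_pow]

theorem binomialCentralMoment_succ (k m : ℕ) :
    binomialCentralMoment p k (m + 1) = ∑ j ∈ range (k + 1),
      (k.choose j : R) * bernoulliCentralMoment p (k - j) * binomialCentralMoment p j m := by
  simp only [binomialCentralMoment, mul_sum]
  rw [sum_range_choose_succ_mul_pow_mul_pow, sum_comm, mul_sum, mul_sum, ← sum_add_distrib]
  refine sum_congr rfl fun i _ => ?_
  calc _ = (m.choose i : R) * p ^ i * (1 - p) ^ (m - i) *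
        ((1 - p) * (((i : R) - m * p) - p) ^ k + p * (((i : R) - m * p) + (1 - p)) ^ k) := by
        push_cast
        ring
    _ = _ := by
        rw [bernoulli_average_add_pow, mul_sum]
        exact sum_congr rfl fun j _ => by ring

theorem fwdDiff_binomialCentralMoment (k : ℕ) :
    fwdDiff 1 (binomialCentralMoment p (k + 1)) = ∑ j ∈ range k,
      ((k + 1).choose j * bernoulliCentralMoment p (k + 1 - j) : R) • binomialCentralMoment p j := by
  ext m
  rw [fwdDiff, binomialCentralMoment_succ, sum_range_succ, sum_range_succ, Finset.sum_apply]
  simp [bernoulliCentralMoment_zero, bernoulliCentralMoment_one]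

theorem fwdDiff_iter_binomialCentralMoment (k : ℕ) :
    (fwdDiff 1)^[k / 2 + 1] (binomialCentralMoment p k) = 0 := by
  induction k using Nat.strong_induction_on with
  | _ k ih =>
  rcases k with _ | k
  · have : binomialCentralMoment p 0 = fun _ => 1 := funext (binomialCentralMoment_zero p)
    rw [this]
    exact fwdDiff_const 1 1
  · rw [Function.iterate_succ_apply, fwdDiff_binomialCentralMoment, fwdDiff_iter_finsetSum]
    refine sum_eq_zero fun j hj => ?_
    have := mem_range.1 hj
    rw [fwdDiff_iter_const_smul, fwdDiff_iter_eq_zero_of_le (ih j (by omega)) (by omega), smul_zero]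

end CentralMoments

theorem binomial_central_moment_polynomial_in_n_general
    (p : ℝ) (k : ℕ) :
    ∃ Q : Polynomial ℝ, Q.natDegree ≤ k / 2 ∧
      ∀ n : ℕ, 0 < n →
        ∑ i ∈ Finset.range (n + 1),
            (n.choose i : ℝ) * p ^ i * (1 - p) ^ (n - i) * ((i : ℝ) - n * p) ^ k
          = Q.eval (n : ℝ) := by
  obtain ⟨Q, hQ, hμ⟩ :=
    exists_natDegree_le_of_fwdDiff_iter_eq_zero (fwdDiff_iter_binomialCentralMoment p k)
  exact ⟨Q, hQ, fun n _ => hμ n⟩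

/-- For fixed `p ∈ (0,1)` and `k`, the `k`-th central moment of the binomial
distribution is a polynomial of degree at most `⌊k/2⌋` in `n`. -/
theorem binomial_central_moment_polynomial_in_n
    (p : ℝ) (hp : p ∈ Set.Ioo (0:ℝ) 1) (k : ℕ) :
    ∃ Q : Polynomial ℝ, Q.natDegree ≤ k / 2 ∧
      ∀ n : ℕ, 0 < n →
        ∑ i ∈ Finset.range (n + 1),
            (n.choose i : ℝ) * p ^ i * (1 - p) ^ (n - i) * ((i : ℝ) - n * p) ^ k
          = Q.eval (n : ℝ) :=
  binomial_central_moment_polynomial_in_n_general p k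
end

section
/- For every p ∈ (0,1), q = 1−p, every positive integer n, and every real r > 0: f_r(n) = (np / (Γ(r+1)·(np+q)^{r+1})) · ∫₀^∞ y^r e^{−y} ( q·e^{yp/(np+q)} + p·e^{−yq/(np+q)} )^{n−1} dy. -/
/-!
Since `p + q = 1`, `q e^{xp} + p e^{-xq} = e^{xp} (q + p e^{-x})`. With `c = np + q = (n-1)p + 1`
the factor `e^{-y}` absorbs `e^{(n-1)py/c}`, so the integrand becomes
`y^r e^{-y/c} (q + p e^{-y/c})^{n-1}`. Expanding the power binomially, every term is a Gamma
integral, `∫ y^r e^{-(k+1)y/c} dy = Γ(r+1) (c/(k+1))^{r+1}`, and `n C(n-1,k) = (k+1) C(n,k+1)`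
turns the resulting sum into `f_r(n)`.
-/

open MeasureTheory Real Finset

theorem integral_rpow_mul_exp_neg_mul_Ioi_eq_Gamma_div {r b : ℝ} (hr : -1 < r) (hb : 0 < b) :
    ∫ t in Set.Ioi (0 : ℝ), t ^ r * exp (-(b * t)) = Gamma (r + 1) / b ^ (r + 1) := by
  have := integral_rpow_mul_exp_neg_mul_Ioi (a := r + 1) (by linarith) hb
  rw [add_sub_cancel_right, div_rpow zero_le_one hb.le, one_rpow] at this
  rw [this, one_div_mul_eq_div]

theorem integrableOn_rpow_mul_exp_neg_mul_Ioi {r b : ℝ} (hr : -1 < r) (hb : 0 < b) :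
    IntegrableOn (fun t : ℝ => t ^ r * exp (-(b * t))) (Set.Ioi 0) := by
  simpa [rpow_one] using integrableOn_rpow_mul_exp_neg_mul_rpow hr zero_lt_one hb

theorem rpow_mul_exp_neg_mul_mul_add_pow (r b a s t : ℝ) (m : ℕ) :
    t ^ r * exp (-(b * t)) * (a + s * exp (-(b * t))) ^ m
      = ∑ k ∈ range (m + 1),
          (m.choose k : ℝ) * s ^ k * a ^ (m - k) * (t ^ r * exp (-(b * (k + 1) * t))) := by
  rw [add_comm, add_pow, mul_sum]
  refine sum_congr rfl fun k _ => ?_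
  have hexp : exp (-(b * t)) * exp (-(b * t)) ^ k = exp (-(b * (k + 1) * t)) := by
    rw [← exp_nat_mul, ← exp_add]
    ring_nf
  rw [mul_pow, ← hexp]
  ring

theorem integral_rpow_mul_exp_neg_mul_mul_add_pow {r b : ℝ} (hr : -1 < r) (hb : 0 < b)
    (a s : ℝ) (m : ℕ) :
    ∫ t in Set.Ioi (0 : ℝ), t ^ r * exp (-(b * t)) * (a + s * exp (-(b * t))) ^ m
      = Gamma (r + 1) * ∑ k ∈ range (m + 1),
          (m.choose k : ℝ) * s ^ k * a ^ (m - k) / (b * (k + 1)) ^ (r + 1) := by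
  have hbk (k : ℕ) : 0 < b * (k + 1) := by positivity
  simp_rw [rpow_mul_exp_neg_mul_mul_add_pow]
  rw [integral_finsetSum _ fun k _ =>
    (integrableOn_rpow_mul_exp_neg_mul_Ioi hr (hbk k)).const_mul _, mul_sum]
  refine sum_congr rfl fun k _ => ?_
  rw [integral_const_mul, integral_rpow_mul_exp_neg_mul_Ioi_eq_Gamma_div hr (hbk k)]
  ring

theorem mul_exp_add_mul_exp_neg_eq {p q : ℝ} (hpq : p + q = 1) (x : ℝ) :
    q * exp (x * p) + p * exp (-(x * q)) = exp (x * p) * (q + p * exp (-x)) := by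
  have hx : x * p + -x = -(x * q) := by linear_combination x * hpq
  rw [mul_add, mul_left_comm, ← exp_add, hx]
  ring

theorem rpow_mul_exp_neg_mul_add_mul_exp_pow_eq {p q c : ℝ} {m : ℕ} (hpq : p + q = 1)
    (hc : c = m * p + 1) (hc0 : c ≠ 0) (r y : ℝ) :
    y ^ r * exp (-y) * (q * exp (y * p / c) + p * exp (-(y * q) / c)) ^ m
      = y ^ r * exp (-(c⁻¹ * y)) * (q + p * exp (-(c⁻¹ * y))) ^ m := by
  set x := c⁻¹ * y
  have hy : y = c * x := by simp [x, hc0]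
  rw [hy, mul_div_right_comm, mul_div_cancel_left₀ _ hc0, neg_div, mul_div_right_comm,
    mul_div_cancel_left₀ _ hc0, mul_exp_add_mul_exp_neg_eq hpq, mul_pow, ← exp_nat_mul]
  have hexp : exp (-(c * x)) * exp (m * (x * p)) = exp (-x) := by
    rw [← exp_add, hc]
    ring_nf
  rw [← hexp]
  ring

theorem sum_Icc_choose_mul_pow_div_rpow_eq (p q r : ℝ) (m : ℕ) :
    ∑ i ∈ Icc 1 (m + 1), ((m + 1).choose i : ℝ) * p ^ i * q ^ (m + 1 - i) / (i : ℝ) ^ r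
      = (m + 1) * p * ∑ k ∈ range (m + 1),
          (m.choose k : ℝ) * p ^ k * q ^ (m - k) / ((k : ℝ) + 1) ^ (r + 1) := by
  rw [← Ico_add_one_right_eq_Icc, sum_Ico_eq_sum_range, Nat.add_sub_cancel, mul_sum]
  refine sum_congr rfl fun k _ => ?_
  have hk : (0 : ℝ) < k + 1 := by positivity
  have hchoose : ((m + 1).choose (k + 1) : ℝ) * (k + 1) = (m + 1) * m.choose k := by
    exact_mod_cast (Nat.add_one_mul_choose_eq m k).symm
  rw [add_comm 1 k, Nat.add_sub_add_right, rpow_add hk, rpow_one, pow_succ]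
  push_cast
  field_simp
  linear_combination p ^ k * q ^ (m - k) * p * hchoose

theorem inverse_moment_binomial_integral_central_repr_general
    (p q : ℝ) (hp : p ∈ Set.Ioo (0:ℝ) 1) (hq : q = 1 - p)
    (n : ℕ) (r : ℝ) (hr : 0 < r) :
    ∑ i ∈ Finset.Icc 1 n, (n.choose i : ℝ) * p ^ i * q ^ (n - i) / (i : ℝ) ^ r
      = ((n : ℝ) * p / (Real.Gamma (r + 1) * ((n : ℝ) * p + q) ^ (r + 1))) *
        ∫ y in Set.Ioi (0:ℝ),
          y ^ r * Real.exp (-y) *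
            (q * Real.exp (y * p / ((n : ℝ) * p + q))
              + p * Real.exp (-(y * q) / ((n : ℝ) * p + q))) ^ (n - 1) := by
  obtain _ | m := n
  · simp
  have hpq : p + q = 1 := by rw [hq]; ring
  set c : ℝ := ((m + 1 : ℕ) : ℝ) * p + q with hc_def
  have hc : c = m * p + 1 := by push_cast [hc_def]; linarith
  have hc0 : 0 < c := by rw [hc]; nlinarith [hp.1]
  have hcinv : 0 < c⁻¹ := inv_pos.mpr hc0
  simp_rw [Nat.add_sub_cancel, rpow_mul_exp_neg_mul_add_mul_exp_pow_eq hpq hc hc0.ne',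
    integral_rpow_mul_exp_neg_mul_mul_add_pow (by linarith : (-1 : ℝ) < r) hcinv,
    sum_Icc_choose_mul_pow_div_rpow_eq, mul_sum]
  push_cast
  refine sum_congr rfl fun k _ => ?_
  rw [mul_rpow hcinv.le (by positivity), inv_rpow hc0.le]
  have hΓ : 0 < Gamma (r + 1) := Gamma_pos_of_pos (by linarith)
  field_simp

/-- For `p ∈ (0,1)`, `q = 1 - p`, positive integer `n` and real `r > 0`,
`f_r(n) = (np/(Γ(r+1)(np+q)^{r+1})) ∫₀^∞ y^r e^{-y}
(q e^{yp/(np+q)} + p e^{-yq/(np+q)})^{n-1} dy`. -/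
theorem inverse_moment_binomial_integral_central_repr
    (p q : ℝ) (hp : p ∈ Set.Ioo (0:ℝ) 1) (hq : q = 1 - p)
    (n : ℕ) (hn : 0 < n) (r : ℝ) (hr : 0 < r) :
    ∑ i ∈ Finset.Icc 1 n, (n.choose i : ℝ) * p ^ i * q ^ (n - i) / (i : ℝ) ^ r
      = ((n : ℝ) * p / (Real.Gamma (r + 1) * ((n : ℝ) * p + q) ^ (r + 1))) *
        ∫ y in Set.Ioi (0:ℝ),
          y ^ r * Real.exp (-y) *
            (q * Real.exp (y * p / ((n : ℝ) * p + q))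
              + p * Real.exp (-(y * q) / ((n : ℝ) * p + q))) ^ (n - 1) :=
  inverse_moment_binomial_integral_central_repr_general p q hp hq n r hr
end
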